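/- Let a, b, c ∈ ℤ, τ, ξ ∈ ℂ, and s ∈ ℂ with Re s > 1 + max(0, Re τ) + max(0, Re ξ). Then the series (1/4)·∑_{n∈ℤ[i], n≠0} (n/|n|)^{4a}·σ_τ(n,b)·σ_ξ(n,c)·|n|^{−2s} converges absolutely and ζ_F(2s−τ−ξ, 2a+b+c) · (1/4)·∑_{n≠0} (n/|n|)^{4a}·σ_τ(n,b)·σ_ξ(n,c)·|n|^{−2s} = ζ_F(s,a)·ζ_F(s−τ, a+b)·ζ_F(s−ξ, a+c)·ζ_F(s−τ−ξ, a+b+c), all ζ_F-values being given by their absolutely convergent series. -/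

import Mathlib

open scoped Classical

noncomputable section

/-- The image of a Gaussian integer in `ℂ`. -/
def gc (n : GaussianInt) : ℂ := GaussianInt.toComplex n

/-- The Hecke `L`-function `ζ_F(s,p) = (1/4) ∑_{n ≠ 0} (n/|n|)^{4p} |n|^{-2s}` as an
absolutely convergent series. -/
def zetaFt (s : ℂ) (p : ℤ) : ℂ :=
  (1 / 4) * ∑' n : GaussianInt,
    if n = 0 then 0
    else (gc n / (‖gc n‖ : ℂ)) ^ (4 * p) * (‖gc n‖ : ℂ) ^ (-2 * s)

/-- The twisted divisor sum `σ_ν(n,p) = (1/4) ∑_{d ∣ n, d ≠ 0} (d/|d|)^{4p} |d|^{2ν}`. -/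
def sigmaFt (ν : ℂ) (p : ℤ) (n : GaussianInt) : ℂ :=
  (1 / 4) * ∑' d : GaussianInt,
    if d ≠ 0 ∧ d ∣ n then
      (gc d / (‖gc d‖ : ℂ)) ^ (4 * p) * (‖gc d‖ : ℂ) ^ (2 * ν)
    else 0

namespace Aux18

abbrev G := GaussianInt
def F (s : ℂ) (p : ℤ) (n : G) : ℂ :=
  if n = 0 then 0
  else (gc n / (‖gc n‖ : ℂ)) ^ (4 * p) * (‖gc n‖ : ℂ) ^ (-2 * s)
lemma gc_ne_zero {n : G} (h : n ≠ 0) : gc n ≠ 0 := by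
  simpa [gc, GaussianInt.toComplex_eq_zero] using h
lemma abs_gc_pos {n : G} (h : n ≠ 0) : 0 < ‖gc n‖ :=
  norm_pos_iff.mpr (gc_ne_zero h)

lemma gc_mul' (m n : G) : gc (m * n) = gc m * gc n := by simp [gc]

lemma abs_gc_mul (m n : G) : ‖gc (m * n)‖ = ‖gc m‖ * ‖gc n‖ := by
  rw [gc_mul', norm_mul]

def cs (n : G) : ℂ := gc n / (‖gc n‖ : ℂ)
def Lg (n : G) : ℂ := (Real.log (‖gc n‖) : ℂ)

lemma cs_ne_zero {n : G} (h : n ≠ 0) : cs n ≠ 0 :=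
  div_ne_zero (gc_ne_zero h) (by exact_mod_cast (abs_gc_pos h).ne')

lemma cs_mul {m n : G} (hm : m ≠ 0) (hn : n ≠ 0) : cs (m * n) = cs m * cs n := by
  rw [cs, cs, cs, abs_gc_mul, gc_mul', Complex.ofReal_mul, div_mul_div_comm]

lemma Lg_mul {m n : G} (hm : m ≠ 0) (hn : n ≠ 0) : Lg (m * n) = Lg m + Lg n := by
  rw [Lg, abs_gc_mul, Real.log_mul (abs_gc_pos hm).ne' (abs_gc_pos hn).ne', Complex.ofReal_add]
  rfl

lemma F_apply (s : ℂ) (p : ℤ) {n : G} (h : n ≠ 0) :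
    F s p n = cs n ^ (4 * p) * Complex.exp (Lg n * (-2 * s)) := by
  rw [F, if_neg h, Complex.cpow_def_of_ne_zero (by exact_mod_cast (abs_gc_pos h).ne'),
    ← Complex.ofReal_log (abs_gc_pos h).le]
  rfl

lemma F_ne_zero (s : ℂ) (p : ℤ) {n : G} (h : n ≠ 0) : F s p n ≠ 0 := by
  rw [F_apply s p h]
  exact mul_ne_zero (zpow_ne_zero _ (cs_ne_zero h)) (Complex.exp_ne_zero _)

lemma F_zero (s : ℂ) (p : ℤ) : F s p 0 = 0 := by rw [F, if_pos rfl]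

lemma F_eq_zero_iff (s : ℂ) (p : ℤ) {n : G} : F s p n = 0 ↔ n = 0 := by
  by_cases h : n = 0
  · simp [h, F_zero]
  · simp [h, F_ne_zero s p h]

lemma F_one (s : ℂ) (p : ℤ) : F s p 1 = 1 := by
  rw [F, if_neg one_ne_zero]
  simp [gc]

lemma norm_F (s : ℂ) (p : ℤ) {n : G} (h : n ≠ 0) :
    ‖F s p n‖ = ‖gc n‖ ^ (-2 * s.re) := by
  rw [F, if_neg h]
  rw [norm_mul, norm_zpow]
  have h1 : ‖gc n / (‖gc n‖ : ℂ)‖ = 1 := by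
    rw [norm_div, Complex.norm_real, Real.norm_eq_abs, abs_of_nonneg (norm_nonneg _)]
    rw [div_self (abs_gc_pos h).ne']
  rw [h1, one_zpow, one_mul]
  rw [Complex.norm_cpow_eq_rpow_re_of_pos (abs_gc_pos h)]
  congr 1
  simp

lemma zpow4 {z : ℂ} (hz : z ≠ 0) (a b : ℤ) : z ^ (4 * (a + b)) = z ^ (4 * a) * z ^ (4 * b) := by
  rw [show 4 * (a + b) = 4 * a + 4 * b by ring, zpow_add₀ hz]

lemma key4 (s τ ξ : ℂ) (a b c : ℤ) {u v w x k n d e : G}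
    (hu : u ≠ 0) (hv : v ≠ 0) (hw : w ≠ 0) (hx : x ≠ 0)
    (hk : k ≠ 0) (hn : n ≠ 0) (hd : d ≠ 0) (he : e ≠ 0)
    (h1 : v * x = d * k) (h2 : w * x = e * k) (h3 : u * (v * (w * x)) = n * (k * k)) :
    F s a u * F (s - τ) (a + b) v * F (s - ξ) (a + c) w * F (s - τ - ξ) (a + b + c) x
      = F (2 * s - τ - ξ) (2 * a + b + c) k * (F s a n * (F (-τ) b d * F (-ξ) c e)) := by
  have CU := cs_ne_zero hu; have CV := cs_ne_zero hv; have CW := cs_ne_zero hw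
  have CX := cs_ne_zero hx; have CK := cs_ne_zero hk; have CN := cs_ne_zero hn
  have CD := cs_ne_zero hd; have CE := cs_ne_zero he
  have hC1 : cs v * cs x = cs d * cs k := by rw [← cs_mul hv hx, ← cs_mul hd hk, h1]
  have hC2 : cs w * cs x = cs e * cs k := by rw [← cs_mul hw hx, ← cs_mul he hk, h2]
  have hC3 : cs u * (cs v * (cs w * cs x)) = cs n * (cs k * cs k) := by
    rw [← cs_mul hw hx, ← cs_mul hv (mul_ne_zero hw hx), ← cs_mul hu (mul_ne_zero hv (mul_ne_zero hw hx)),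
      ← cs_mul hk hk, ← cs_mul hn (mul_ne_zero hk hk), h3]
  have hL1 : Lg v + Lg x = Lg d + Lg k := by rw [← Lg_mul hv hx, ← Lg_mul hd hk, h1]
  have hL2 : Lg w + Lg x = Lg e + Lg k := by rw [← Lg_mul hw hx, ← Lg_mul he hk, h2]
  have hL3 : Lg u + (Lg v + (Lg w + Lg x)) = Lg n + (Lg k + Lg k) := by
    rw [← Lg_mul hw hx, ← Lg_mul hv (mul_ne_zero hw hx), ← Lg_mul hu (mul_ne_zero hv (mul_ne_zero hw hx)),
      ← Lg_mul hk hk, ← Lg_mul hn (mul_ne_zero hk hk), h3]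
  rw [F_apply _ _ hu, F_apply _ _ hv, F_apply _ _ hw, F_apply _ _ hx, F_apply _ _ hk,
    F_apply _ _ hn, F_apply _ _ hd, F_apply _ _ he]
  have hzp : cs u ^ (4 * a) * cs v ^ (4 * (a + b)) * cs w ^ (4 * (a + c))
      * cs x ^ (4 * (a + b + c))
      = cs k ^ (4 * (2 * a + b + c)) * (cs n ^ (4 * a) * (cs d ^ (4 * b) * cs e ^ (4 * c))) := by
    rw [zpow4 CV a b, zpow4 CW a c, show a + b + c = (a + b) + c by ring, zpow4 CX (a+b) c,
      zpow4 CX a b, show (2*a+b+c : ℤ) = (a + (a+b)) + c by ring, zpow4 CK (a+(a+b)) c,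
      zpow4 CK a (a+b), zpow4 CK a b]
    have e1 : cs u ^ (4*a) * cs v ^ (4*a) * cs w ^ (4*a) * cs x ^ (4*a)
        = cs n ^ (4*a) * (cs k ^ (4*a) * cs k ^ (4*a)) := by
      rw [← mul_zpow, ← mul_zpow, ← mul_zpow, ← mul_zpow, ← mul_zpow]
      rw [show cs u * cs v * cs w * cs x = cs u * (cs v * (cs w * cs x)) by ring, hC3]
    have e2 : cs v ^ (4*b) * cs x ^ (4*b) = cs d ^ (4*b) * cs k ^ (4*b) := by
      rw [← mul_zpow, ← mul_zpow, hC1]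
    have e3 : cs w ^ (4*c) * cs x ^ (4*c) = cs e ^ (4*c) * cs k ^ (4*c) := by
      rw [← mul_zpow, ← mul_zpow, hC2]
    calc cs u ^ (4*a) * (cs v ^ (4*a) * cs v ^ (4*b)) * (cs w ^ (4*a) * cs w ^ (4*c))
          * (cs x ^ (4*a) * cs x ^ (4*b) * cs x ^ (4*c))
        = (cs u ^ (4*a) * cs v ^ (4*a) * cs w ^ (4*a) * cs x ^ (4*a))
          * (cs v ^ (4*b) * cs x ^ (4*b)) * (cs w ^ (4*c) * cs x ^ (4*c)) := by ring
      _ = (cs n ^ (4*a) * (cs k ^ (4*a) * cs k ^ (4*a)))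
          * (cs d ^ (4*b) * cs k ^ (4*b)) * (cs e ^ (4*c) * cs k ^ (4*c)) := by rw [e1, e2, e3]
      _ = cs k ^ (4*a) * cs k ^ (4*a) * cs k ^ (4*b) * cs k ^ (4*c)
          * (cs n ^ (4*a) * (cs d ^ (4*b) * cs e ^ (4*c))) := by ring
      _ = cs k ^ (4*a) * (cs k ^ (4*a) * cs k ^ (4*b)) * cs k ^ (4*c)
          * (cs n ^ (4 * a) * (cs d ^ (4 * b) * cs e ^ (4 * c))) := by ring
  have hex : Complex.exp (Lg u * (-2 * s)) * Complex.exp (Lg v * (-2 * (s - τ)))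
      * Complex.exp (Lg w * (-2 * (s - ξ))) * Complex.exp (Lg x * (-2 * (s - τ - ξ)))
      = Complex.exp (Lg k * (-2 * (2 * s - τ - ξ)))
        * (Complex.exp (Lg n * (-2 * s)) * (Complex.exp (Lg d * (-2 * -τ))
          * Complex.exp (Lg e * (-2 * -ξ)))) := by
    rw [← Complex.exp_add, ← Complex.exp_add, ← Complex.exp_add, ← Complex.exp_add,
      ← Complex.exp_add, ← Complex.exp_add]
    congr 1
    linear_combination (-2 * s) * hL3 + (2 * τ) * hL1 + (2 * ξ) * hL2
  calc cs u ^ (4 * a) * Complex.exp (Lg u * (-2 * s))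
        * (cs v ^ (4 * (a+b)) * Complex.exp (Lg v * (-2 * (s - τ))))
        * (cs w ^ (4 * (a+c)) * Complex.exp (Lg w * (-2 * (s - ξ))))
        * (cs x ^ (4 * (a+b+c)) * Complex.exp (Lg x * (-2 * (s - τ - ξ))))
      = (cs u ^ (4 * a) * cs v ^ (4 * (a + b)) * cs w ^ (4 * (a + c))
          * cs x ^ (4 * (a + b + c)))
        * (Complex.exp (Lg u * (-2 * s)) * Complex.exp (Lg v * (-2 * (s - τ)))
          * Complex.exp (Lg w * (-2 * (s - ξ))) * Complex.exp (Lg x * (-2 * (s - τ - ξ)))) := by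
        ring
    _ = (cs k ^ (4 * (2 * a + b + c)) * (cs n ^ (4 * a) * (cs d ^ (4 * b) * cs e ^ (4 * c))))
        * (Complex.exp (Lg k * (-2 * (2 * s - τ - ξ)))
          * (Complex.exp (Lg n * (-2 * s)) * (Complex.exp (Lg d * (-2 * -τ))
            * Complex.exp (Lg e * (-2 * -ξ))))) := by rw [hzp, hex]
    _ = _ := by ring

def gEquiv : G ≃ (Fin 2 → ℤ) where
  toFun n := ![n.re, n.im]
  invFun v := ⟨v 0, v 1⟩
  left_inv n := by simp
  right_inv v := by
    funext i
    fin_cases i <;> simp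

lemma abs_gc_eq (n : G) : ‖gc n‖ = Real.sqrt ((n.re : ℝ)^2 + (n.im : ℝ)^2) := by
  rw [Complex.norm_def, Complex.normSq_apply, gc]
  rw [← GaussianInt.intCast_re, ← GaussianInt.intCast_im]
  ring_nf

lemma norm_gEquiv_le (n : G) : ‖gEquiv n‖ ≤ ‖gc n‖ := by
  rw [EisensteinSeries.norm_eq_max_natAbs, abs_gc_eq]
  have h1 : ∀ m : ℤ, ∀ o : ℤ, (m.natAbs : ℝ) ≤ Real.sqrt ((m : ℝ)^2 + (o : ℝ)^2) := by
    intro m o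
    rw [show ((m.natAbs : ℝ)) = |(m:ℝ)| by rw [Nat.cast_natAbs]; push_cast; rfl]
    rw [← Real.sqrt_sq_eq_abs]
    apply Real.sqrt_le_sqrt
    nlinarith [sq_nonneg (o:ℝ)]
  simp only [gEquiv, Equiv.coe_fn_mk, Matrix.cons_val_zero, Matrix.cons_val_one, Matrix.head_cons]
  push_cast [Nat.cast_max]
  rw [max_le_iff]
  constructor
  · exact_mod_cast h1 n.re n.im
  · have := h1 n.im n.re
    rw [add_comm] at this
    exact_mod_cast this

lemma gEquiv_ne_zero {n : G} (h : n ≠ 0) : gEquiv n ≠ 0 :=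
  fun hc => h (by simpa [show gEquiv.symm 0 = 0 from rfl] using congrArg gEquiv.symm hc)

lemma summable_base {σ : ℝ} (hσ : 1 < σ) :
    Summable fun n : G => if n = 0 then (0:ℝ) else ‖gc n‖ ^ (-2 * σ) := by
  have h0 : (2:ℝ) < 2 * σ := by linarith
  have h := EisensteinSeries.summable_one_div_norm_rpow h0
  have h2 : Summable fun n : G => ‖gEquiv n‖ ^ (-(2 * σ)) :=
    (gEquiv.summable_iff (f := fun x : Fin 2 → ℤ => ‖x‖ ^ (-(2*σ)))).mpr h
  refine Summable.of_nonneg_of_le (fun n => ?_) (fun n => ?_) h2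
  · by_cases hn : n = 0 <;> simp only [hn, if_pos, if_neg, if_true, if_false] <;> positivity
  · by_cases hn : n = 0
    · rw [if_pos hn]
      positivity
    · rw [if_neg hn, show -2 * σ = -(2*σ) by ring]
      apply Real.rpow_le_rpow_of_nonpos
      · rw [norm_pos_iff]
        exact gEquiv_ne_zero hn
      · exact norm_gEquiv_le n
      · linarith

lemma finite_dvd {n : G} (hn : n ≠ 0) : {d : G | d ∣ n}.Finite := by
  have hN : 0 < n.norm := GaussianInt.norm_pos.mpr hn
  have hsub : {d : G | d ∣ n} ⊆
      (fun p : ℤ × ℤ => (⟨p.1, p.2⟩ : G)) ''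
        (Set.Icc (-n.norm) n.norm ×ˢ Set.Icc (-n.norm) n.norm) := by
    intro d hd
    obtain ⟨q, hq⟩ := hd
    have hdq : d.norm ∣ n.norm := ⟨q.norm, by rw [hq, Zsqrtd.norm_mul]⟩
    have hdn : d.norm ≤ n.norm := Int.le_of_dvd hN hdq
    have h1 : d.norm = d.re^2 + d.im^2 := by
      simp only [Zsqrtd.norm]; ring
    have hre : |d.re| ≤ n.norm := by nlinarith [sq_nonneg d.im, abs_nonneg d.re, sq_abs d.re]
    have him : |d.im| ≤ n.norm := by nlinarith [sq_nonneg d.re, abs_nonneg d.im, sq_abs d.im]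
    refine ⟨(d.re, d.im), ?_, rfl⟩
    simp only [Set.mem_prod, Set.mem_Icc]
    have h2 := abs_le.mp hre
    have h3 := abs_le.mp him
    exact ⟨⟨h2.1, h2.2⟩, h3.1, h3.2⟩
  exact Set.Finite.subset (((Set.finite_Icc _ _).prod (Set.finite_Icc _ _)).image _) hsub


lemma summable_norm_F {s : ℂ} (hs : 1 < s.re) (p : ℤ) :
    Summable fun n : G => ‖F s p n‖ := by
  refine (summable_base (σ := s.re) hs).congr fun n => ?_
  by_cases hn : n = 0
  · simp [hn, F_zero]
  · rw [if_neg hn, norm_F s p hn]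

def Dv (ν : ℂ) (p : ℤ) (n : G) : G → ℂ := fun d => if d ∣ n then F (-ν) p d else 0

lemma Dv_finite_support (ν : ℂ) (p : ℤ) {n : G} (hn : n ≠ 0) :
    (Function.support (Dv ν p n)).Finite := by
  apply (finite_dvd hn).subset
  intro d hd
  by_contra hc
  exact hd (by simp only [Dv]; exact if_neg (fun h => hc h))

lemma Dv_summable (ν : ℂ) (p : ℤ) {n : G} (hn : n ≠ 0) : Summable (Dv ν p n) :=
  summable_of_finite_support (Dv_finite_support ν p hn)

lemma Dv_summable_norm (ν : ℂ) (p : ℤ) {n : G} (hn : n ≠ 0) :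
    Summable fun d => ‖Dv ν p n d‖ := by
  apply summable_of_finite_support
  apply (Dv_finite_support ν p hn).subset
  intro d hd
  simp only [Function.mem_support, norm_ne_zero_iff] at hd ⊢
  exact hd

lemma sigma_eq (ν : ℂ) (p : ℤ) {n : G} (hn : n ≠ 0) :
    sigmaFt ν p n = (1/4) * ∑' d, Dv ν p n d := by
  rw [sigmaFt]
  congr 1
  apply tsum_congr
  intro d
  by_cases hd : d = 0
  · subst hd
    simp only [Dv, F_zero, ne_eq, not_true_eq_false, false_and, if_false, ite_self]
  · by_cases hdn : d ∣ n
    · rw [Dv, if_pos hdn, if_pos ⟨hd, hdn⟩, F, if_neg hd, neg_mul_neg]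
    · rw [Dv, if_neg hdn, if_neg (by tauto)]

noncomputable instance : StrongNormalizationMonoid GaussianInt :=
  UniqueFactorizationMonoid.normalizationMonoid

noncomputable instance : StrongNormalizedGCDMonoid GaussianInt :=
  UniqueFactorizationMonoid.toStrongNormalizedGCDMonoid _

def Psi (q : G × (G × (G × G))) : ((G × G) × G) × G :=
  let k := q.1; let n := q.2.1; let d := q.2.2.1; let e := q.2.2.2
  let x := gcd d e * k / normalize k
  (((n * x / (d * e), d * k / x), e * k / x), x)

lemma Psi_spec {k n d e : G} (hk : k ≠ 0) (hn : n ≠ 0) (hd : d ≠ 0) (he : e ≠ 0)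
    (hdn : d ∣ n) (hen : e ∣ n) :
    ∃ u v w x : G, Psi (k, (n, (d, e))) = (((u, v), w), x) ∧
      u ≠ 0 ∧ v ≠ 0 ∧ w ≠ 0 ∧ x ≠ 0 ∧
      v * x = d * k ∧ w * x = e * k ∧ u * (v * (w * x)) = n * (k * k) ∧
      x * normalize k = gcd d e * k ∧ gcd v w = normalize k ∧ normalize x = gcd d e := by
  set g := gcd d e with hg
  have hg0 : g ≠ 0 := fun h => hd ((gcd_eq_zero_iff d e).mp h).1
  have hnk0 : normalize k ≠ 0 := fun h => hk (normalize_eq_zero.mp h)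
  have hnkdvd : normalize k ∣ g * k := (normalize_dvd_iff.mpr dvd_rfl).trans (dvd_mul_left k g)
  set x := g * k / normalize k with hxdef
  have hx : x * normalize k = g * k := by
    rw [hxdef, mul_comm]
    exact EuclideanDomain.mul_div_cancel' hnk0 hnkdvd
  have hx0 : x ≠ 0 := by
    intro h
    rw [h, zero_mul] at hx
    exact (mul_ne_zero hg0 hk) hx.symm
  have hxg : normalize x = g := by
    have : normalize (x * normalize k) = normalize (g * k) := by rw [hx]
    rw [normalize_mul, normalize_mul, normalize_idem, normalize_gcd, ← hg] at this
    exact mul_right_cancel₀ hnk0 this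
  have hxdk : x ∣ d * k := (Dvd.intro _ hx).trans (mul_dvd_mul_right (gcd_dvd_left d e) k)
  have hxek : x ∣ e * k := (Dvd.intro _ hx).trans (mul_dvd_mul_right (gcd_dvd_right d e) k)
  set v := d * k / x with hvdef
  have hv : v * x = d * k := by
    rw [hvdef, mul_comm]; exact EuclideanDomain.mul_div_cancel' hx0 hxdk
  have hv0 : v ≠ 0 := by
    intro h; rw [h, zero_mul] at hv; exact (mul_ne_zero hd hk) hv.symm
  set w := e * k / x with hwdef
  have hw : w * x = e * k := by
    rw [hwdef, mul_comm]; exact EuclideanDomain.mul_div_cancel' hx0 hxek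
  have hw0 : w ≠ 0 := by
    intro h; rw [h, zero_mul] at hw; exact (mul_ne_zero he hk) hw.symm
  -- d * e ∣ n * x
  have hlcm : lcm d e ∣ n := lcm_dvd hdn hen
  have hge : d * e ∣ g * n := by
    refine ((gcd_mul_lcm d e).symm.dvd).trans ?_
    exact mul_dvd_mul_left g hlcm
  have hden : d * e ∣ n * x := by
    have h1 : (d * e) * k ∣ (g * n) * k := mul_dvd_mul_right hge k
    have h2 : (g * n) * k = (n * x) * normalize k := by
      rw [show (g*n)*k = n * (g * k) by ring, ← hx]; ring
    rw [h2] at h1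
    have h3 : (d * e) * normalize k ∣ (n * x) * normalize k :=
      (((associated_normalize k).mul_left (d*e)).symm.dvd).trans h1
    exact (mul_dvd_mul_iff_right hnk0).mp h3
  set u := n * x / (d * e) with hudef
  have hu : u * (d * e) = n * x := by
    rw [hudef, mul_comm]; exact EuclideanDomain.mul_div_cancel' (mul_ne_zero hd he) hden
  have hu0 : u ≠ 0 := by
    intro h; rw [h, zero_mul] at hu; exact (mul_ne_zero hn hx0) hu.symm
  refine ⟨u, v, w, x, rfl, hu0, hv0, hw0, hx0, hv, hw, ?_, by rw [hx, hg], ?_, by rw [hxg, hg]⟩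
  · have hstep : (u * (v * (w * x))) * x = (n * (k * k)) * x := by
      calc (u * (v * (w * x))) * x = u * ((v * x) * (w * x)) := by ring
        _ = u * ((d * k) * (e * k)) := by rw [hv, hw]
        _ = (u * (d * e)) * (k * k) := by ring
        _ = (n * x) * (k * k) := by rw [hu]
        _ = (n * (k * k)) * x := by ring
    exact mul_right_cancel₀ hx0 hstep
  · have h1 : gcd (v * x) (w * x) = gcd (d * k) (e * k) := by rw [hv, hw]
    rw [gcd_mul_right, gcd_mul_right, hxg, ← hg] at h1
    rw [mul_comm] at h1
    exact mul_left_cancel₀ hg0 h1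
lemma Psi_inj {k n d e k' n' d' e' : G}
    (hk : k ≠ 0) (hn : n ≠ 0) (hd : d ≠ 0) (he : e ≠ 0) (hdn : d ∣ n) (hen : e ∣ n)
    (hk' : k' ≠ 0) (hn' : n' ≠ 0) (hd' : d' ≠ 0) (he' : e' ≠ 0) (hdn' : d' ∣ n') (hen' : e' ∣ n')
    (heq : Psi (k, (n, (d, e))) = Psi (k', (n', (d', e')))) :
    (k, (n, (d, e))) = (k', (n', (d', e'))) := by
  obtain ⟨u, v, w, x, hP, hu0, hv0, hw0, hx0, hv, hw, h3, hxk, hgvw, hnx⟩ :=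
    Psi_spec hk hn hd he hdn hen
  obtain ⟨u', v', w', x', hP', hu0', hv0', hw0', hx0', hv', hw', h3', hxk', hgvw', hnx'⟩ :=
    Psi_spec hk' hn' hd' he' hdn' hen'
  rw [hP, hP'] at heq
  obtain ⟨⟨⟨hu, hvv⟩, hww⟩, hxx⟩ : ((u = u' ∧ v = v') ∧ w = w') ∧ x = x' := by
    simpa [Prod.ext_iff] using heq
  subst hu hvv hww hxx
  have hnk : normalize k = normalize k' := by rw [← hgvw, ← hgvw']
  have hkk : k = k' := by
    have e1 : normalize x * k = normalize x * k' := by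
      calc normalize x * k = x * normalize k := by rw [hnx]; exact hxk.symm
        _ = x * normalize k' := by rw [hnk]
        _ = normalize x * k' := by rw [hnx']; exact hxk'
    exact mul_left_cancel₀ (fun h => hx0 (normalize_eq_zero.mp h)) e1
  subst hkk
  have hdd : d = d' := mul_right_cancel₀ hk (by rw [← hv, ← hv'])
  have hee : e = e' := mul_right_cancel₀ hk (by rw [← hw, ← hw'])
  have hnn : n = n' := by
    have := h3.symm.trans h3'
    exact mul_right_cancel₀ (mul_ne_zero hk hk) this
  simp [hdd, hee, hnn]

lemma Psi_surj {u v w x : G} (hu : u ≠ 0) (hv : v ≠ 0) (hw : w ≠ 0) (hx : x ≠ 0) :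
    ∃ k n d e : G, k ≠ 0 ∧ n ≠ 0 ∧ d ≠ 0 ∧ e ≠ 0 ∧ d ∣ n ∧ e ∣ n ∧
      Psi (k, (n, (d, e))) = (((u, v), w), x) := by
  set γ := gcd v w with hγ
  have hγ0 : γ ≠ 0 := fun h => hv ((gcd_eq_zero_iff v w).mp h).1
  have hnx0 : normalize x ≠ 0 := fun h => hx (normalize_eq_zero.mp h)
  have hdvd : normalize x ∣ x * γ := (normalize_dvd_iff.mpr dvd_rfl).trans (Dvd.intro γ rfl)
  set k := x * γ / normalize x with hkdef
  have hkx : k * normalize x = x * γ := by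
    rw [hkdef, mul_comm]; exact EuclideanDomain.mul_div_cancel' hnx0 hdvd
  have hk0 : k ≠ 0 := by
    intro h; rw [h, zero_mul] at hkx; exact (mul_ne_zero hx hγ0) hkx.symm
  have hnk : normalize k = γ := by
    have : normalize (k * normalize x) = normalize (x * γ) := by rw [hkx]
    rw [normalize_mul, normalize_mul, normalize_idem] at this
    rw [hγ, normalize_gcd, ← hγ] at this
    rw [mul_comm (normalize x)] at this
    exact mul_right_cancel₀ hnx0 this
  have hkv : k ∣ v := ((associated_normalize k).dvd).trans (by rw [hnk]; exact gcd_dvd_left v w)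
  have hkw : k ∣ w := ((associated_normalize k).dvd).trans (by rw [hnk]; exact gcd_dvd_right v w)
  obtain ⟨v₁, hv₁⟩ := hkv
  obtain ⟨w₁, hw₁⟩ := hkw
  have hv₁0 : v₁ ≠ 0 := fun h => hv (by rw [hv₁, h, mul_zero])
  have hw₁0 : w₁ ≠ 0 := fun h => hw (by rw [hw₁, h, mul_zero])
  refine ⟨k, u * (v₁ * (w₁ * x)), v₁ * x, w₁ * x, hk0,
    (by exact mul_ne_zero hu (mul_ne_zero hv₁0 (mul_ne_zero hw₁0 hx))),
    mul_ne_zero hv₁0 hx, mul_ne_zero hw₁0 hx,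
    ⟨u * w₁, by ring⟩, ⟨u * v₁, by ring⟩, ?_⟩
  obtain ⟨u', v', w', x', hP, hu0', hv0', hw0', hx0', hv', hw', h3', hxk', hgvw', hnx'⟩ :=
    Psi_spec hk0 (mul_ne_zero hu (mul_ne_zero hv₁0 (mul_ne_zero hw₁0 hx)))
      (mul_ne_zero hv₁0 hx) (mul_ne_zero hw₁0 hx)
      (⟨u * w₁, by ring⟩ : (v₁*x) ∣ _) (⟨u * v₁, by ring⟩ : (w₁*x) ∣ _)
  rw [hP]
  -- gcd (v₁ x) (w₁ x) = normalize x, since gcd v₁ w₁ = 1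
  have hgv₁ : gcd v₁ w₁ * γ = γ := by
    have : gcd (k * v₁) (k * w₁) = normalize k * gcd v₁ w₁ := gcd_mul_left k v₁ w₁
    rw [← hv₁, ← hw₁, ← hγ, hnk] at this
    rw [mul_comm] at this
    exact this.symm
  have hgde : gcd (v₁ * x) (w₁ * x) = normalize x := by
    rw [gcd_mul_right]
    have h1 : gcd v₁ w₁ * γ = 1 * γ := by rw [one_mul]; exact hgv₁
    rw [mul_right_cancel₀ hγ0 h1, one_mul]
  -- x' = x
  have hxx : x' = x := by
    have e1 : x' * normalize k = x * normalize k := by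
      rw [hxk', hgde]
      calc normalize x * k = k * normalize x := by ring
        _ = x * γ := hkx
        _ = x * normalize k := by rw [hnk]
    exact mul_right_cancel₀ (fun h => hk0 (normalize_eq_zero.mp h)) e1
  subst hxx
  -- v' = v, w' = w
  have hvv : v' = v := by
    have e1 : v' * x' = v * x' := by
      rw [hv']
      calc (v₁ * x') * k = (k * v₁) * x' := by ring
        _ = v * x' := by rw [← hv₁]
    exact mul_right_cancel₀ hx0' e1
  have hww : w' = w := by
    have e1 : w' * x' = w * x' := by
      rw [hw']
      calc (w₁ * x') * k = (k * w₁) * x' := by ring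
        _ = w * x' := by rw [← hw₁]
    exact mul_right_cancel₀ hx0' e1
  have huu : u' = u := by
    have e1 : u' * (v' * (w' * x')) = u * (v' * (w' * x')) := by
      rw [h3', hvv, hww, hv₁, hw₁]
      ring
    exact mul_right_cancel₀ (mul_ne_zero hv0' (mul_ne_zero hw0' hx0')) e1
  rw [huu, hvv, hww]


def W (s τ ξ : ℂ) (a b c : ℤ) : ((G × G) × G) × G → ℂ := fun p =>
  F s a p.1.1.1 * F (s - τ) (a + b) p.1.1.2 * F (s - ξ) (a + c) p.1.2
    * F (s - τ - ξ) (a + b + c) p.2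

def WT (s τ ξ : ℂ) (a b c : ℤ) : G × (G × (G × G)) → ℂ := fun q =>
  if q.2.2.1 ∣ q.2.1 ∧ q.2.2.2 ∣ q.2.1 then
    F (2 * s - τ - ξ) (2 * a + b + c) q.1
      * (F s a q.2.1 * (F (-τ) b q.2.2.1 * F (-ξ) c q.2.2.2))
  else 0

def R3 (s τ ξ : ℂ) (a b c : ℤ) : G × (G × G) → ℂ := fun t =>
  if t.2.1 ∣ t.1 ∧ t.2.2 ∣ t.1 then
    F s a t.1 * (F (-τ) b t.2.1 * F (-ξ) c t.2.2)
  else 0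

variable {s τ ξ : ℂ} {a b c : ℤ}

lemma WT_ne_zero_iff {q : G × (G × (G × G))} :
    WT s τ ξ a b c q ≠ 0 ↔ q.1 ≠ 0 ∧ q.2.1 ≠ 0 ∧ q.2.2.1 ≠ 0 ∧ q.2.2.2 ≠ 0 ∧
      q.2.2.1 ∣ q.2.1 ∧ q.2.2.2 ∣ q.2.1 := by
  rw [WT]
  split_ifs with h
  · simp only [ne_eq, mul_ne_zero_iff, F_eq_zero_iff]
    tauto
  · simp only [ne_eq, not_true_eq_false, not_not]
    tauto

lemma W_ne_zero_iff {p : ((G × G) × G) × G} :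
    W s τ ξ a b c p ≠ 0 ↔ p.1.1.1 ≠ 0 ∧ p.1.1.2 ≠ 0 ∧ p.1.2 ≠ 0 ∧ p.2 ≠ 0 := by
  rw [W]
  simp only [ne_eq, mul_ne_zero_iff, F_eq_zero_iff]
  tauto

lemma hfg_main (t : Function.support (WT s τ ξ a b c)) :
    W s τ ξ a b c (Psi t.val) = WT s τ ξ a b c t.val := by
  obtain ⟨⟨k, n, d, e⟩, hmem⟩ := t
  obtain ⟨hk, hn, hd, he, hdn, hen⟩ := WT_ne_zero_iff.mp hmem
  obtain ⟨u, v, w, x, hP, hu, hv, hw, hx, h1, h2, h3, -, -, -⟩ := Psi_spec hk hn hd he hdn hen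
  simp only [hP]
  rw [show WT s τ ξ a b c (k, n, d, e) = F (2 * s - τ - ξ) (2 * a + b + c) k
      * (F s a n * (F (-τ) b d * F (-ξ) c e)) from if_pos ⟨hdn, hen⟩]
  exact key4 s τ ξ a b c hu hv hw hx hk hn hd he h1 h2 h3

lemma hi_main : Function.Injective
    (fun t : Function.support (WT s τ ξ a b c) => Psi t.val) := by
  rintro ⟨⟨k, n, d, e⟩, hmem⟩ ⟨⟨k', n', d', e'⟩, hmem'⟩ heq
  obtain ⟨hk, hn, hd, he, hdn, hen⟩ := WT_ne_zero_iff.mp hmem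
  obtain ⟨hk', hn', hd', he', hdn', hen'⟩ := WT_ne_zero_iff.mp hmem'
  exact Subtype.ext (Psi_inj hk hn hd he hdn hen hk' hn' hd' he' hdn' hen' heq)

lemma hrange_main : Function.support (W s τ ξ a b c) ⊆
    Set.range (fun t : Function.support (WT s τ ξ a b c) => Psi t.val) := by
  rintro ⟨⟨⟨u, v⟩, w⟩, x⟩ hp
  obtain ⟨hu, hv, hw, hx⟩ := W_ne_zero_iff.mp hp
  obtain ⟨k, n, d, e, hk, hn, hd, he, hdn, hen, hPsi⟩ := Psi_surj hu hv hw hx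
  exact ⟨⟨(k, (n, (d, e))), WT_ne_zero_iff.mpr ⟨hk, hn, hd, he, hdn, hen⟩⟩, hPsi⟩

lemma tsum_W_eq_tsum_WT :
    ∑' p, W s τ ξ a b c p = ∑' q, WT s τ ξ a b c q :=
  tsum_eq_tsum_of_ne_zero_bij _ hi_main hrange_main hfg_main

lemma summable_W_iff_WT :
    Summable (W s τ ξ a b c) ↔ Summable (WT s τ ξ a b c) :=
  exists_congr fun _ => hasSum_iff_hasSum_of_ne_zero_bij _ hi_main hrange_main hfg_main


theorem main18 (a b c : ℤ) (τ ξ : ℂ) (s : ℂ)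
    (hs : 1 + max 0 τ.re + max 0 ξ.re < s.re) :
    Summable (fun n : GaussianInt =>
      ‖if n = 0 then 0 else
        (gc n / (‖gc n‖ : ℂ)) ^ (4 * a) * sigmaFt τ b n * sigmaFt ξ c n *
          (‖gc n‖ : ℂ) ^ (-2 * s)‖) ∧
    zetaFt (2 * s - τ - ξ) (2 * a + b + c) *
        ((1 / 4) * ∑' n : GaussianInt,
          if n = 0 then 0 else
            (gc n / (‖gc n‖ : ℂ)) ^ (4 * a) * sigmaFt τ b n * sigmaFt ξ c n *
              (‖gc n‖ : ℂ) ^ (-2 * s)) =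
      zetaFt s a * zetaFt (s - τ) (a + b) * zetaFt (s - ξ) (a + c) *
        zetaFt (s - τ - ξ) (a + b + c) := by
  have hmt : (0:ℝ) ≤ max 0 τ.re := le_max_left _ _
  have hmx : (0:ℝ) ≤ max 0 ξ.re := le_max_left _ _
  have hmt' : τ.re ≤ max 0 τ.re := le_max_right _ _
  have hmx' : ξ.re ≤ max 0 ξ.re := le_max_right _ _
  have h1 : 1 < s.re := by linarith
  have h2 : 1 < (s - τ).re := by rw [Complex.sub_re]; linarith
  have h3 : 1 < (s - ξ).re := by rw [Complex.sub_re]; linarith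
  have h4 : 1 < (s - τ - ξ).re := by rw [Complex.sub_re, Complex.sub_re]; linarith
  have h0 : 1 < (2 * s - τ - ξ).re := by
    rw [Complex.sub_re, Complex.sub_re]
    have h2s : (2 * s).re = 2 * s.re := by
      simp [Complex.mul_re]
    rw [h2s]; linarith
  have S1 := summable_norm_F h1 a
  have S2 := summable_norm_F h2 (a+b)
  have S3 := summable_norm_F h3 (a+c)
  have S4 := summable_norm_F h4 (a+b+c)
  have S0 := summable_norm_F h0 (2*a+b+c)
  have N1 : Summable fun p : G × G => ‖F s a p.1 * F (s-τ) (a+b) p.2‖ := S1.mul_norm S2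
  have N2 : Summable fun p : (G × G) × G =>
      ‖(F s a p.1.1 * F (s-τ) (a+b) p.1.2) * F (s-ξ) (a+c) p.2‖ := N1.mul_norm S3
  have NW : Summable fun p : ((G × G) × G) × G => ‖W s τ ξ a b c p‖ := N2.mul_norm S4
  have SW : Summable (W s τ ξ a b c) := summable_norm_iff.mp NW
  have SWT : Summable (WT s τ ξ a b c) := (summable_W_iff_WT).mp SW
  have NWT : Summable fun q => ‖WT s τ ξ a b c q‖ := summable_norm_iff.mpr SWT
  have NR3 : Summable fun t : G × (G × G) => ‖R3 s τ ξ a b c t‖ := by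
    have hinj : Function.Injective (fun t : G × (G × G) => ((1 : G), t)) :=
      fun t t' h => (Prod.ext_iff.mp h).2
    have hcomp := NWT.comp_injective hinj
    refine hcomp.congr fun t => ?_
    show ‖WT s τ ξ a b c (1, t)‖ = ‖R3 s τ ξ a b c t‖
    rw [WT, R3]
    split_ifs with h
    · show ‖F (2*s-τ-ξ) (2*a+b+c) 1 * _‖ = _
      rw [F_one, one_mul]
    · rfl
  have SR3 : Summable (R3 s τ ξ a b c) := summable_norm_iff.mp NR3
  have NR3slice : ∀ n : G, Summable fun q : G × G => ‖R3 s τ ξ a b c (n, q)‖ := fun n =>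
    NR3.comp_injective (fun q q' h => (Prod.ext_iff.mp h).2)
  have hQ : ∀ n : G, (if n = 0 then 0 else
      (gc n / (‖gc n‖ : ℂ)) ^ (4 * a) * sigmaFt τ b n * sigmaFt ξ c n *
        (‖gc n‖ : ℂ) ^ (-2 * s))
      = (1/16 : ℂ) * ∑' q : G × G, R3 s τ ξ a b c (n, q) := by
    intro n
    by_cases hn : n = 0
    · rw [if_pos hn, hn]
      have hz : ∀ q : G × G, R3 s τ ξ a b c (0, q) = 0 := by
        intro q; rw [R3]
        split_ifs
        · show F s a 0 * _ = 0
          rw [F_zero, zero_mul]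
        · rfl
      rw [tsum_congr hz, tsum_zero, mul_zero]
    · rw [if_neg hn, sigma_eq τ b hn, sigma_eq ξ c hn]
      have hms := tsum_mul_tsum_of_summable_norm (Dv_summable_norm τ b hn) (Dv_summable_norm ξ c hn)
      calc (gc n / (‖gc n‖ : ℂ)) ^ (4 * a) * ((1/4 : ℂ) * ∑' d, Dv τ b n d)
            * ((1/4 : ℂ) * ∑' d, Dv ξ c n d) * (‖gc n‖ : ℂ) ^ (-2 * s)
          = (1/16 : ℂ) * (F s a n * ((∑' d, Dv τ b n d) * (∑' d, Dv ξ c n d))) := by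
            rw [F, if_neg hn]; ring
        _ = (1/16 : ℂ) * (F s a n * ∑' q : G × G, Dv τ b n q.1 * Dv ξ c n q.2) := by rw [hms]
        _ = (1/16 : ℂ) * ∑' q : G × G, F s a n * (Dv τ b n q.1 * Dv ξ c n q.2) := by
            rw [tsum_mul_left]
        _ = (1/16 : ℂ) * ∑' q : G × G, R3 s τ ξ a b c (n, q) := by
            congr 1
            apply tsum_congr
            intro q
            rw [Dv, Dv, R3]
            by_cases hd : q.1 ∣ n <;> by_cases he : q.2 ∣ n
            · rw [if_pos hd, if_pos he, if_pos (show q.1 ∣ n ∧ q.2 ∣ n from ⟨hd, he⟩)]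
            · rw [if_pos hd, if_neg he, if_neg (by tauto), mul_zero, mul_zero]
            · rw [if_neg hd, if_pos he, if_neg (by tauto), zero_mul, mul_zero]
            · rw [if_neg hd, if_neg he, if_neg (by tauto), zero_mul, mul_zero]
  constructor
  · have hmaj : Summable fun n : G => (1/16 : ℝ) * ∑' q : G × G, ‖R3 s τ ξ a b c (n, q)‖ :=
      (NR3.prod).mul_left _
    refine Summable.of_nonneg_of_le (fun n => norm_nonneg _) (fun n => ?_) hmaj
    rw [hQ n, norm_mul]
    have h16 : ‖(1/16 : ℂ)‖ = (1/16 : ℝ) := by norm_num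
    rw [h16]
    exact mul_le_mul_of_nonneg_left (norm_tsum_le_tsum_norm (NR3slice n)) (by norm_num)
  · rw [tsum_congr hQ, tsum_mul_left]
    have hps : ∑' t : G × (G × G), R3 s τ ξ a b c t
        = ∑' n : G, ∑' q : G × G, R3 s τ ξ a b c (n, q) :=
      SR3.tsum_prod' (fun n => SR3.prod_factor n)
    rw [← hps]
    have hWT : (∑' k : G, F (2*s-τ-ξ) (2*a+b+c) k) * (∑' t : G × (G × G), R3 s τ ξ a b c t)
        = ∑' q : G × (G × (G × G)), WT s τ ξ a b c q := by
      rw [tsum_mul_tsum_of_summable_norm S0 NR3]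
      apply tsum_congr
      intro q
      rw [WT, R3]
      split_ifs with h
      · ring
      · rw [mul_zero]
    have hE1 := tsum_mul_tsum_of_summable_norm S1 S2
    have hE2 := tsum_mul_tsum_of_summable_norm N1 S3
    have hE3 := tsum_mul_tsum_of_summable_norm N2 S4
    have hWexp : ∑' p : ((G × G) × G) × G, W s τ ξ a b c p
        = ∑' z : ((G × G) × G) × G,
            ((F s a z.1.1.1 * F (s-τ) (a+b) z.1.1.2) * F (s-ξ) (a+c) z.1.2)
              * F (s-τ-ξ) (a+b+c) z.2 :=
      tsum_congr fun z => by rw [W]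
    rw [show zetaFt (2*s - τ - ξ) (2*a + b + c)
        = (1/4 : ℂ) * ∑' k : G, F (2*s-τ-ξ) (2*a+b+c) k from rfl,
      show zetaFt s a = (1/4 : ℂ) * ∑' n : G, F s a n from rfl,
      show zetaFt (s-τ) (a+b) = (1/4 : ℂ) * ∑' n : G, F (s-τ) (a+b) n from rfl,
      show zetaFt (s-ξ) (a+c) = (1/4 : ℂ) * ∑' n : G, F (s-ξ) (a+c) n from rfl,
      show zetaFt (s-τ-ξ) (a+b+c) = (1/4 : ℂ) * ∑' n : G, F (s-τ-ξ) (a+b+c) n from rfl]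
    calc ((1/4 : ℂ) * ∑' k : G, F (2*s-τ-ξ) (2*a+b+c) k)
          * ((1/4 : ℂ) * ((1/16 : ℂ) * ∑' t : G × (G × G), R3 s τ ξ a b c t))
        = (1/256 : ℂ) * ((∑' k : G, F (2*s-τ-ξ) (2*a+b+c) k)
            * ∑' t : G × (G × G), R3 s τ ξ a b c t) := by ring
      _ = (1/256 : ℂ) * ∑' q : G × (G × (G × G)), WT s τ ξ a b c q := by rw [hWT]
      _ = (1/256 : ℂ) * ∑' p : ((G × G) × G) × G, W s τ ξ a b c p := by
          rw [tsum_W_eq_tsum_WT]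
      _ = (1/256 : ℂ) * ((∑' p : (G × G) × G,
            (F s a p.1.1 * F (s-τ) (a+b) p.1.2) * F (s-ξ) (a+c) p.2)
            * ∑' n : G, F (s-τ-ξ) (a+b+c) n) := by rw [hWexp, ← hE3]
      _ = (1/256 : ℂ) * (((∑' p : G × G, F s a p.1 * F (s-τ) (a+b) p.2)
            * ∑' n : G, F (s-ξ) (a+c) n) * ∑' n : G, F (s-τ-ξ) (a+b+c) n) := by rw [← hE2]
      _ = (1/256 : ℂ) * ((((∑' n : G, F s a n) * ∑' n : G, F (s-τ) (a+b) n)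
            * ∑' n : G, F (s-ξ) (a+c) n) * ∑' n : G, F (s-τ-ξ) (a+b+c) n) := by rw [← hE1]
      _ = ((1/4 : ℂ) * ∑' n : G, F s a n) * ((1/4 : ℂ) * ∑' n : G, F (s-τ) (a+b) n)
            * ((1/4 : ℂ) * ∑' n : G, F (s-ξ) (a+c) n)
            * ((1/4 : ℂ) * ∑' n : G, F (s-τ-ξ) (a+b+c) n) := by ring

end Aux18

theorem stmt18 (a b c : ℤ) (τ ξ : ℂ) (s : ℂ)
    (hs : 1 + max 0 τ.re + max 0 ξ.re < s.re) :
    Summable (fun n : GaussianInt =>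
      ‖if n = 0 then 0 else
        (gc n / (‖gc n‖ : ℂ)) ^ (4 * a) * sigmaFt τ b n * sigmaFt ξ c n *
          (‖gc n‖ : ℂ) ^ (-2 * s)‖) ∧
    zetaFt (2 * s - τ - ξ) (2 * a + b + c) *
        ((1 / 4) * ∑' n : GaussianInt,
          if n = 0 then 0 else
            (gc n / (‖gc n‖ : ℂ)) ^ (4 * a) * sigmaFt τ b n * sigmaFt ξ c n *
              (‖gc n‖ : ℂ) ^ (-2 * s)) =
      zetaFt s a * zetaFt (s - τ) (a + b) * zetaFt (s - ξ) (a + c) *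
        zetaFt (s - τ - ξ) (a + b + c) := Aux18.main18 a b c τ ξ s hs
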